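/- arXiv:1709.01742 — 2 statements merged into one kernel-verified Lean document; each statement's English description precedes it below -/
import Mathlib

section
/- Let 0 < a₀ < a₁, b ∈ ℝ_+^{d−1}, and suppose supp Ψ̂ ⊆ ([−a₁,−a₀]∪[a₀,a₁]) × Q_b with Q_b = ∏_{i=1}^{d−1}[−b_i,b_i]. If Ψ̂ · Ψ̂(A_a S_s^T ·) is not identically zero, then a ∈ [−a₁/a₀, −a₀/a₁] ∪ [a₀/a₁, a₁/a₀] and s ∈ Q_{d₁} with d₁ = (a₀^{−1} + a₀^{−(1+1/d)} a₁^{1/d}) b. -/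
open MeasureTheory

/-- The parabolic scaling matrix `A_a = diag(a, sgn(a)|a|^{1/d} I_{d-1})`, `d = n+1`. -/
noncomputable def scaleMat (n : ℕ) (a : ℝ) : Matrix (Fin (n+1)) (Fin (n+1)) ℝ :=
  Matrix.diagonal (fun i => if i = 0 then a else Real.sign a * |a| ^ ((n + 1 : ℝ))⁻¹)

/-- The shear matrix `S_s` with first row `(1, sᵀ)` and the identity below. -/
noncomputable def shearMat (n : ℕ) (s : Fin n → ℝ) : Matrix (Fin (n+1)) (Fin (n+1)) ℝ :=
  Matrix.of fun i j =>
    if i = j then 1 else if i = 0 then (if hj : j = 0 then 0 else s (j.pred hj)) else 0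


/-- **Support lemma (ψ–ψ case).** Let `0 < a₀ < a₁`, `b ∈ ℝ₊^{d-1}` and suppose
`supp Ψ̂ ⊆ ([-a₁,-a₀] ∪ [a₀,a₁]) × Q_b` with `Q_b = ∏ [-bᵢ, bᵢ]`. If
`Ψ̂ · Ψ̂(A_a S_sᵀ ·)` is not identically zero, then
`a ∈ [-a₁/a₀, -a₀/a₁] ∪ [a₀/a₁, a₁/a₀]` (i.e. `a₀/a₁ ≤ |a| ≤ a₁/a₀`) and `s ∈ Q_{d₁}`
with `d₁ = (a₀⁻¹ + a₀^{-(1+1/d)} a₁^{1/d}) b`, `d = n+1`. -/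
theorem shearlet_support_lemma_psi_psi
    (n : ℕ) (hn : 1 ≤ n)
    (a₀ a₁ : ℝ) (h0 : 0 < a₀) (h01 : a₀ < a₁)
    (b : Fin n → ℝ) (hb : ∀ i, 0 < b i)
    (Ψhat : (Fin (n+1) → ℝ) → ℂ)
    (hsupp : ∀ ξ : Fin (n+1) → ℝ, Ψhat ξ ≠ 0 →
      (a₀ ≤ |ξ 0| ∧ |ξ 0| ≤ a₁) ∧ ∀ i : Fin n, |ξ i.succ| ≤ b i)
    (a : ℝ) (ha : a ≠ 0) (s : Fin n → ℝ)
    (hne : ∃ ξ : Fin (n+1) → ℝ,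
      Ψhat ξ * Ψhat ((scaleMat n a * (shearMat n s).transpose).mulVec ξ) ≠ 0) :
    (a₀ / a₁ ≤ |a| ∧ |a| ≤ a₁ / a₀) ∧
    ∀ i : Fin n, |s i| ≤
      (a₀⁻¹ + a₀ ^ (-(1 + ((n + 1 : ℝ))⁻¹)) * a₁ ^ ((n + 1 : ℝ))⁻¹) * b i := by
  
  obtain ⟨ξ, hξ⟩ := hne
  set η := (scaleMat n a * (shearMat n s).transpose).mulVec ξ with hηdef
  have h1 : Ψhat ξ ≠ 0 := fun h => hξ (by rw [h, zero_mul])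
  have h2 : Ψhat η ≠ 0 := fun h => hξ (by rw [h, mul_zero])
  obtain ⟨⟨hξ0a, hξ0b⟩, hξi⟩ := hsupp ξ h1
  obtain ⟨⟨hη0a, hη0b⟩, hηi⟩ := hsupp η h2
  set e : ℝ := ((n + 1 : ℝ))⁻¹ with he
  have hη0 : η 0 = a * ξ 0 := by
    rw [hηdef, ← Matrix.mulVec_mulVec]
    simp [scaleMat, Matrix.mulVec_diagonal, Matrix.diagonal_apply, Matrix.mulVec,
      dotProduct, shearMat, Fin.sum_univ_succ, Fin.succ_ne_zero]
  have hηs : ∀ i : Fin n, η i.succ = Real.sign a * |a| ^ e * (s i * ξ 0 + ξ i.succ) := by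
    intro i
    rw [hηdef, ← Matrix.mulVec_mulVec]
    simp [scaleMat, Matrix.mulVec_diagonal, Matrix.diagonal_apply, Matrix.mulVec,
      dotProduct, shearMat, Fin.sum_univ_succ, Fin.succ_ne_zero, Fin.succ_inj,
      (Fin.succ_ne_zero i).symm, he]
  have haabs : 0 < |a| := abs_pos.mpr ha
  have hξ0pos : 0 < |ξ 0| := lt_of_lt_of_le h0 hξ0a
  have habsmul : |η 0| = |a| * |ξ 0| := by rw [hη0, abs_mul]
  have hlow : a₀ / a₁ ≤ |a| := by
    rw [div_le_iff₀ (lt_trans h0 h01)]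
    calc a₀ ≤ |η 0| := hη0a
    _ = |a| * |ξ 0| := habsmul
    _ ≤ |a| * a₁ := by nlinarith
  have hhigh : |a| ≤ a₁ / a₀ := by
    rw [le_div_iff₀ h0]
    calc |a| * a₀ ≤ |a| * |ξ 0| := by nlinarith
    _ = |η 0| := habsmul.symm
    _ ≤ a₁ := hη0b
  refine ⟨⟨hlow, hhigh⟩, fun i => ?_⟩
  have hsgn : |Real.sign a| = 1 := by
    rcases lt_or_gt_of_ne ha with h | h
    · simp [Real.sign_of_neg h]
    · simp [Real.sign_of_pos h]
  set t : ℝ := |a| ^ e with ht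
  have htpos : 0 < t := Real.rpow_pos_of_pos haabs e
  have hAi : t * |s i * ξ 0 + ξ i.succ| ≤ b i := by
    have := hηi i
    rw [hηs i, abs_mul, abs_mul, hsgn, one_mul, abs_of_pos htpos] at this
    exact this
  set K : ℝ := (a₀ / a₁) ^ e with hK
  have hKpos : 0 < K := Real.rpow_pos_of_pos (div_pos h0 (lt_trans h0 h01)) e
  have hKt : K ≤ t := Real.rpow_le_rpow (le_of_lt (div_pos h0 (lt_trans h0 h01))) hlow
    (le_of_lt (by positivity))
  have hbi := hb i
  have hmid : |s i * ξ 0 + ξ i.succ| ≤ b i / K := by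
    rw [le_div_iff₀ hKpos]
    calc |s i * ξ 0 + ξ i.succ| * K ≤ |s i * ξ 0 + ξ i.succ| * t := by
          exact mul_le_mul_of_nonneg_left hKt (abs_nonneg _)
    _ = t * |s i * ξ 0 + ξ i.succ| := mul_comm _ _
    _ ≤ b i := hAi
  have hkey : |s i| * a₀ ≤ b i / K + b i := by
    calc |s i| * a₀ ≤ |s i| * |ξ 0| := by nlinarith [abs_nonneg (s i)]
    _ = |s i * ξ 0| := (abs_mul _ _).symm
    _ ≤ |s i * ξ 0 + ξ i.succ| + |ξ i.succ| := by
          have := abs_sub_abs_le_abs_sub (s i * ξ 0 + ξ i.succ) (ξ i.succ)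
          have h2 := abs_add_le (s i * ξ 0 + ξ i.succ) (-(ξ i.succ))
          simpa [add_assoc] using h2.trans_eq' (by ring_nf; exact abs_mul _ _)
    _ ≤ b i / K + b i := add_le_add hmid (hξi i)
  have hKeq : K = a₀ ^ e / a₁ ^ e := Real.div_rpow (le_of_lt h0) (le_of_lt (lt_trans h0 h01)) e
  have ha0e : (0:ℝ) < a₀ ^ e := Real.rpow_pos_of_pos h0 e
  have ha1e : (0:ℝ) < a₁ ^ e := Real.rpow_pos_of_pos (lt_trans h0 h01) e
  have hRHS : (a₀⁻¹ + a₀ ^ (-(1 + e)) * a₁ ^ e) * b i = (b i / K + b i) / a₀ := by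
    rw [hKeq, Real.rpow_neg (le_of_lt h0), Real.rpow_add h0, Real.rpow_one]
    field_simp
    ring
  rw [hRHS, le_div_iff₀ h0]
  exact hkey
end

section
/- For all y, z ∈ ℝ, λ ≠ 0 and k > 1, there is a constant C depending only on k such that ∫_ℝ (1+|x|)^{−k}(1+|x−y|)^{−k}(1+|λx−z|)^{−k} dx ≤ C (1+|y|)^{−k} max{1,|λ|}^{−1} [ (1 + min{1,|λ|} |y − z/λ|)^{−k} + (1 + min{1,|λ|} |z/λ|)^{−k} ]. -/
open MeasureTheory
open scoped ENNReal

/-- Basic antitone rpow estimate: if `v ≤ c * u` then `u ^ (-k) ≤ c ^ k * v ^ (-k)`. -/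
lemma key_rpow {k u v c : ℝ} (hk : 0 < k) (hv : 0 < v) (hc : 0 < c) (h : v ≤ c * u) :
    u ^ (-k) ≤ c ^ k * v ^ (-k) := by
  have hu : 0 < u := by nlinarith
  have h1 : v / c ≤ u := (div_le_iff₀ hc).2 (by linarith)
  have h2 : u ^ (-k) ≤ (v / c) ^ (-k) :=
    Real.rpow_le_rpow_of_nonpos (by positivity) h1 (by linarith)
  calc u ^ (-k) ≤ (v / c) ^ (-k) := h2
    _ = c ^ k * v ^ (-k) := by
        rw [Real.div_rpow hv.le hc.le, Real.rpow_neg hc.le, div_eq_mul_inv, inv_inv, mul_comm]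

/-- Pointwise two-factor bound, case `1 ≤ lam`. -/
lemma pt_ge (k a w x lam : ℝ) (hk : 1 < k) (hl : 1 ≤ lam) :
    (1+|x-a|) ^ (-k) * (1+lam*|x-w|) ^ (-k) ≤
      (2^k*(1+|a-w|) ^ (-k)) * (1+lam*|x-w|) ^ (-k)
      + (4^k*lam⁻¹*(1+|a-w|) ^ (-k)) * (1+|x-a|) ^ (-k) := by
  have hk0 : (0:ℝ) < k := by linarith
  have hl0 : (0:ℝ) < lam := by linarith
  have hxw : (0:ℝ) ≤ |x-w| := abs_nonneg _
  have hxa : (0:ℝ) ≤ |x-a| := abs_nonneg _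
  have hd : (0:ℝ) ≤ |a-w| := abs_nonneg _
  have hgb : (0:ℝ) < 1+lam*|x-w| := by nlinarith
  have hfb : (0:ℝ) < 1+|x-a| := by linarith
  have hdb : (0:ℝ) < 1+|a-w| := by linarith
  have tri : |a-w| ≤ |x-a| + |x-w| := by
    have h := abs_add_le (a-x) (x-w)
    rw [show a-x + (x-w) = a-w by ring] at h
    rw [abs_sub_comm a x] at h
    exact h
  have hgnn : (0:ℝ) ≤ (1+lam*|x-w|) ^ (-k) := Real.rpow_nonneg hgb.le _
  have hfnn : (0:ℝ) ≤ (1+|x-a|) ^ (-k) := Real.rpow_nonneg hfb.le _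
  by_cases hcase : 1 + |a-w| ≤ 2*(1+|x-a|)
  · have h1 : (1+|x-a|) ^ (-k) ≤ 2^k * (1+|a-w|) ^ (-k) :=
      key_rpow hk0 hdb two_pos hcase
    have h2 := mul_le_mul_of_nonneg_right h1 hgnn
    have h3 : 0 ≤ (4^k*lam⁻¹*(1+|a-w|) ^ (-k)) * (1+|x-a|) ^ (-k) := by
      have : (0:ℝ) ≤ lam⁻¹ := inv_nonneg.2 hl0.le
      have h4 : (0:ℝ) ≤ (4:ℝ)^k := Real.rpow_nonneg (by norm_num) _
      have h5 : (0:ℝ) ≤ (1+|a-w|) ^ (-k) := Real.rpow_nonneg hdb.le _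
      positivity
    linarith
  · push_neg at hcase
    have hlk : lam ^ (1/k) ≤ lam := by
      have := Real.rpow_le_rpow_of_exponent_le hl
        (show 1/k ≤ 1 by rw [div_le_one hk0]; linarith)
      simpa using this
    have hlk0 : (0:ℝ) < lam ^ (1/k) := Real.rpow_pos_of_pos hl0 _
    -- |x-a| small, so |x-w| big
    have hclaim : lam ^ (1/k) * (1+|a-w|) ≤ 4*(1+lam*|x-w|) := by
      nlinarith [mul_le_mul_of_nonneg_right hlk hdb.le,
        mul_le_mul_of_nonneg_left (show (|a-w|+1)/2 ≤ |x-w| by linarith) hl0.le]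
    have hc : 1+|a-w| ≤ (4*lam ^ (-(1/k))) * (1+lam*|x-w|) := by
      have h6 : 1+|a-w| ≤ (4*(1+lam*|x-w|)) / (lam ^ (1/k)) :=
        (le_div_iff₀ hlk0).2 (by nlinarith)
      calc (1:ℝ)+|a-w| ≤ (4*(1+lam*|x-w|)) / (lam ^ (1/k)) := h6
        _ = (4*lam ^ (-(1/k))) * (1+lam*|x-w|) := by
            rw [Real.rpow_neg hl0.le]; field_simp
    have h2 : (1+lam*|x-w|) ^ (-k) ≤ (4*lam ^ (-(1/k)))^k * (1+|a-w|) ^ (-k) :=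
      key_rpow hk0 hdb (by positivity) hc
    have h3 : (4*lam ^ (-(1/k)))^k = 4^k * lam⁻¹ := by
      rw [Real.mul_rpow (by norm_num) (Real.rpow_nonneg hl0.le _),
        ← Real.rpow_mul hl0.le]
      congr 1
      rw [show -(1/k)*k = -1 by field_simp, Real.rpow_neg_one]
    rw [h3] at h2
    have h4 := mul_le_mul_of_nonneg_left h2 hfnn
    have h5 : 0 ≤ (2^k*(1+|a-w|) ^ (-k)) * (1+lam*|x-w|) ^ (-k) := by
      have : (0:ℝ) ≤ (2:ℝ)^k := Real.rpow_nonneg (by norm_num) _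
      have h7 : (0:ℝ) ≤ (1+|a-w|) ^ (-k) := Real.rpow_nonneg hdb.le _
      positivity
    nlinarith [h4, h5]

/-- Pointwise two-factor bound, case `lam ≤ 1`. -/
lemma pt_le (k a w x lam : ℝ) (hk : 1 < k) (hl0 : 0 < lam) (hl : lam ≤ 1) :
    (1+|x-a|) ^ (-k) * (1+lam*|x-w|) ^ (-k) ≤
      (2^k*(1+lam*|a-w|) ^ (-k)) * (1+|x-a|) ^ (-k)
      + (4^k*lam*(1+lam*|a-w|) ^ (-k)) * (1+lam*|x-w|) ^ (-k) := by
  have hk0 : (0:ℝ) < k := by linarith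
  have hxw : (0:ℝ) ≤ |x-w| := abs_nonneg _
  have hxa : (0:ℝ) ≤ |x-a| := abs_nonneg _
  have hd : (0:ℝ) ≤ |a-w| := abs_nonneg _
  have hgb : (0:ℝ) < 1+lam*|x-w| := by nlinarith
  have hfb : (0:ℝ) < 1+|x-a| := by linarith
  have hdb : (0:ℝ) < 1+lam*|a-w| := by nlinarith
  have tri : |a-w| ≤ |x-a| + |x-w| := by
    have h := abs_add_le (a-x) (x-w)
    rw [show a-x + (x-w) = a-w by ring] at h
    rw [abs_sub_comm a x] at h
    exact h
  have hgnn : (0:ℝ) ≤ (1+lam*|x-w|) ^ (-k) := Real.rpow_nonneg hgb.le _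
  have hfnn : (0:ℝ) ≤ (1+|x-a|) ^ (-k) := Real.rpow_nonneg hfb.le _
  by_cases hcase : 1 + lam*|a-w| ≤ 2*(1+lam*|x-w|)
  · have h1 : (1+lam*|x-w|) ^ (-k) ≤ 2^k * (1+lam*|a-w|) ^ (-k) :=
      key_rpow hk0 hdb two_pos hcase
    have h2 := mul_le_mul_of_nonneg_left h1 hfnn
    have h3 : 0 ≤ (4^k*lam*(1+lam*|a-w|) ^ (-k)) * (1+lam*|x-w|) ^ (-k) := by
      have h4 : (0:ℝ) ≤ (4:ℝ)^k := Real.rpow_nonneg (by norm_num) _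
      have h5 : (0:ℝ) ≤ (1+lam*|a-w|) ^ (-k) := Real.rpow_nonneg hdb.le _
      positivity
    nlinarith [h2, h3]
  · push_neg at hcase
    have hlk : lam ≤ lam ^ (1/k) := by
      have := Real.rpow_le_rpow_of_exponent_ge hl0 hl
        (show 1/k ≤ 1 by rw [div_le_one hk0]; linarith)
      simpa using this
    have hlk0 : (0:ℝ) < lam ^ (1/k) := Real.rpow_pos_of_pos hl0 _
    have hclaim : 1+lam*|a-w| ≤ (4*lam ^ (1/k)) * (1+|x-a|) := by
      -- from hcase : 2*(1+lam*|x-w|) < 1+lam*|a-w|, so lam*|x-w| < (lam*|a-w|-1)/2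
      nlinarith [mul_le_mul_of_nonneg_right hlk (by linarith : (0:ℝ) ≤ 1+|x-a|),
        mul_le_mul_of_nonneg_left tri hl0.le]
    have h2 : (1+|x-a|) ^ (-k) ≤ (4*lam ^ (1/k))^k * (1+lam*|a-w|) ^ (-k) :=
      key_rpow hk0 hdb (by positivity) hclaim
    have h3 : (4*lam ^ (1/k))^k = 4^k * lam := by
      rw [Real.mul_rpow (by norm_num) (Real.rpow_nonneg hl0.le _),
        ← Real.rpow_mul hl0.le]
      congr 1
      rw [show 1/k*k = 1 by field_simp, Real.rpow_one]
    rw [h3] at h2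
    have h4 := mul_le_mul_of_nonneg_right h2 hgnn
    have h5 : 0 ≤ (2^k*(1+lam*|a-w|) ^ (-k)) * (1+|x-a|) ^ (-k) := by
      have : (0:ℝ) ≤ (2:ℝ)^k := Real.rpow_nonneg (by norm_num) _
      have h7 : (0:ℝ) ≤ (1+lam*|a-w|) ^ (-k) := Real.rpow_nonneg hdb.le _
      positivity
    nlinarith [h4, h5]

/-- The basic one-factor integral. -/
noncomputable def Jint (k : ℝ) : ℝ≥0∞ := ∫⁻ x : ℝ, ENNReal.ofReal ((1+|x|) ^ (-k))

lemma meas_base (k c : ℝ) : Measurable fun x : ℝ => ENNReal.ofReal ((1+|x-c|) ^ (-k)) := by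
  have hcont : Continuous fun x : ℝ => (1+|x-c|) ^ (-k) := by
    apply Continuous.rpow_const
    · continuity
    · intro x; left; positivity
  exact (ENNReal.continuous_ofReal.comp hcont).measurable

lemma meas_scaled (k lam w : ℝ) (hlam : 0 ≤ lam) :
    Measurable fun x : ℝ => ENNReal.ofReal ((1+lam*|x-w|) ^ (-k)) := by
  have hcont : Continuous fun x : ℝ => (1+lam*|x-w|) ^ (-k) := by
    apply Continuous.rpow_const
    · continuity
    · intro x; left
      have : 0 ≤ lam * |x-w| := mul_nonneg hlam (abs_nonneg _)
      positivity
  exact (ENNReal.continuous_ofReal.comp hcont).measurable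

lemma J_translate (k c : ℝ) :
    ∫⁻ x : ℝ, ENNReal.ofReal ((1+|x-c|) ^ (-k)) = Jint k :=
  lintegral_sub_right_eq_self (fun x : ℝ => ENNReal.ofReal ((1+|x|) ^ (-k))) c

lemma J_scale (k lam w : ℝ) (hlam : 0 < lam) :
    ∫⁻ x : ℝ, ENNReal.ofReal ((1+lam*|x-w|) ^ (-k)) = ENNReal.ofReal lam⁻¹ * Jint k := by
  have h1 : ∀ x : ℝ, (1:ℝ)+lam*|x-w| = 1+|lam*x - lam*w| := by
    intro x; rw [← mul_sub, abs_mul, abs_of_pos hlam]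
  calc ∫⁻ x : ℝ, ENNReal.ofReal ((1+lam*|x-w|) ^ (-k))
      = ∫⁻ x : ℝ, (fun u : ℝ => ENNReal.ofReal ((1+|u - lam*w|) ^ (-k))) (lam * x) := by
        apply lintegral_congr; intro x; simp only []; rw [h1 x]
    _ = ∫⁻ u : ℝ, ENNReal.ofReal ((1+|u - lam*w|) ^ (-k))
          ∂(Measure.map (fun x : ℝ => lam * x) volume) :=
        (lintegral_map (meas_base k (lam*w)) (measurable_const_mul lam)).symm
    _ = ENNReal.ofReal |lam⁻¹| * ∫⁻ u : ℝ, ENNReal.ofReal ((1+|u - lam*w|) ^ (-k)) := by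
        rw [Real.map_volume_mul_left (ne_of_gt hlam), lintegral_smul_measure, smul_eq_mul]
    _ = ENNReal.ofReal lam⁻¹ * Jint k := by
        rw [abs_of_pos (inv_pos.2 hlam), J_translate]

lemma J_lt_top (k : ℝ) (hk : 1 < k) : Jint k < ⊤ := by
  have hint : Integrable (fun x : ℝ => (1+‖x‖) ^ (-k)) := by
    apply integrable_one_add_norm
    simp [Module.finrank_self]; linarith
  have h0 : 0 ≤ᵐ[volume] fun x : ℝ => (1+|x|) ^ (-k) :=
    Filter.Eventually.of_forall fun x => Real.rpow_nonneg (by positivity) _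
  have h1 : HasFiniteIntegral (fun x : ℝ => (1+|x|) ^ (-k)) volume := by
    simpa [Real.norm_eq_abs] using hint.hasFiniteIntegral
  exact (hasFiniteIntegral_iff_ofReal h0).1 h1

/-- Two-factor convolution estimate. -/
lemma twoFactor (k : ℝ) (hk : 1 < k) (a w lam : ℝ) (hlam : 0 < lam) :
    ∫⁻ x : ℝ, ENNReal.ofReal ((1+|x-a|) ^ (-k)) * ENNReal.ofReal ((1+lam*|x-w|) ^ (-k)) ≤
      ENNReal.ofReal ((2^k+4^k) * (max 1 lam)⁻¹ * (1 + min 1 lam * |a-w|) ^ (-k)) * Jint k := by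
  have hk0 : (0:ℝ) < k := by linarith
  have h2k : (0:ℝ) ≤ (2:ℝ)^k := Real.rpow_nonneg (by norm_num) _
  have h4k : (0:ℝ) ≤ (4:ℝ)^k := Real.rpow_nonneg (by norm_num) _
  have hd : (0:ℝ) ≤ |a-w| := abs_nonneg _
  have hfb : ∀ x : ℝ, (0:ℝ) < 1+|x-a| := fun x => by positivity
  have hgb : ∀ x : ℝ, (0:ℝ) < 1+lam*|x-w| := fun x => by
    nlinarith [abs_nonneg (x-w)]
  rcases le_total 1 lam with hl | hl
  · -- lam ≥ 1
    rw [max_eq_right hl, min_eq_left hl, one_mul]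
    have hdb : (0:ℝ) < 1+|a-w| := by linarith
    have hA : (0:ℝ) ≤ 2^k*(1+|a-w|) ^ (-k) :=
      mul_nonneg h2k (Real.rpow_nonneg hdb.le _)
    have hB : (0:ℝ) ≤ 4^k*lam⁻¹*(1+|a-w|) ^ (-k) :=
      mul_nonneg (mul_nonneg h4k (inv_nonneg.2 (by linarith))) (Real.rpow_nonneg hdb.le _)
    calc ∫⁻ x : ℝ, ENNReal.ofReal ((1+|x-a|) ^ (-k)) * ENNReal.ofReal ((1+lam*|x-w|) ^ (-k))
        ≤ ∫⁻ x : ℝ, (ENNReal.ofReal (2^k*(1+|a-w|) ^ (-k)) * ENNReal.ofReal ((1+lam*|x-w|) ^ (-k))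
            + ENNReal.ofReal (4^k*lam⁻¹*(1+|a-w|) ^ (-k)) * ENNReal.ofReal ((1+|x-a|) ^ (-k))) := by
          apply lintegral_mono; intro x
          dsimp only
          rw [← ENNReal.ofReal_mul hA, ← ENNReal.ofReal_mul hB,
            ← ENNReal.ofReal_mul (Real.rpow_nonneg (hfb x).le _),
            ← ENNReal.ofReal_add (mul_nonneg hA (Real.rpow_nonneg (hgb x).le _))
              (mul_nonneg hB (Real.rpow_nonneg (hfb x).le _))]
          exact ENNReal.ofReal_le_ofReal (pt_ge k a w x lam hk hl)
      _ = ENNReal.ofReal (2^k*(1+|a-w|) ^ (-k)) * (∫⁻ x : ℝ, ENNReal.ofReal ((1+lam*|x-w|) ^ (-k)))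
            + ENNReal.ofReal (4^k*lam⁻¹*(1+|a-w|) ^ (-k)) * (∫⁻ x : ℝ, ENNReal.ofReal ((1+|x-a|) ^ (-k))) := by
          rw [lintegral_add_left ((meas_scaled k lam w (by linarith)).const_mul _),
            lintegral_const_mul' _ _ ENNReal.ofReal_ne_top,
            lintegral_const_mul' _ _ ENNReal.ofReal_ne_top]
      _ = ENNReal.ofReal (2^k*(1+|a-w|) ^ (-k)) * (ENNReal.ofReal lam⁻¹ * Jint k)
            + ENNReal.ofReal (4^k*lam⁻¹*(1+|a-w|) ^ (-k)) * Jint k := by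
          rw [J_scale k lam w hlam, J_translate]
      _ = ENNReal.ofReal ((2^k+4^k) * lam⁻¹ * (1+|a-w|) ^ (-k)) * Jint k := by
          rw [← mul_assoc, ← add_mul]
          congr 1
          rw [← ENNReal.ofReal_mul hA, ← ENNReal.ofReal_add (by positivity) hB]
          congr 1; ring
  · -- lam ≤ 1
    rw [max_eq_left hl, min_eq_right hl, inv_one, mul_one]
    have hdb : (0:ℝ) < 1+lam*|a-w| := by nlinarith
    have hA : (0:ℝ) ≤ 2^k*(1+lam*|a-w|) ^ (-k) :=
      mul_nonneg h2k (Real.rpow_nonneg hdb.le _)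
    have hB : (0:ℝ) ≤ 4^k*lam*(1+lam*|a-w|) ^ (-k) :=
      mul_nonneg (mul_nonneg h4k hlam.le) (Real.rpow_nonneg hdb.le _)
    calc ∫⁻ x : ℝ, ENNReal.ofReal ((1+|x-a|) ^ (-k)) * ENNReal.ofReal ((1+lam*|x-w|) ^ (-k))
        ≤ ∫⁻ x : ℝ, (ENNReal.ofReal (2^k*(1+lam*|a-w|) ^ (-k)) * ENNReal.ofReal ((1+|x-a|) ^ (-k))
            + ENNReal.ofReal (4^k*lam*(1+lam*|a-w|) ^ (-k)) * ENNReal.ofReal ((1+lam*|x-w|) ^ (-k))) := by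
          apply lintegral_mono; intro x
          dsimp only
          rw [← ENNReal.ofReal_mul hA, ← ENNReal.ofReal_mul hB,
            ← ENNReal.ofReal_mul (Real.rpow_nonneg (hfb x).le _),
            ← ENNReal.ofReal_add (mul_nonneg hA (Real.rpow_nonneg (hfb x).le _))
              (mul_nonneg hB (Real.rpow_nonneg (hgb x).le _))]
          exact ENNReal.ofReal_le_ofReal (pt_le k a w x lam hk hlam hl)
      _ = ENNReal.ofReal (2^k*(1+lam*|a-w|) ^ (-k)) * (∫⁻ x : ℝ, ENNReal.ofReal ((1+|x-a|) ^ (-k)))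
            + ENNReal.ofReal (4^k*lam*(1+lam*|a-w|) ^ (-k)) * (∫⁻ x : ℝ, ENNReal.ofReal ((1+lam*|x-w|) ^ (-k))) := by
          rw [lintegral_add_left ((meas_base k a).const_mul _),
            lintegral_const_mul' _ _ ENNReal.ofReal_ne_top,
            lintegral_const_mul' _ _ ENNReal.ofReal_ne_top]
      _ = ENNReal.ofReal (2^k*(1+lam*|a-w|) ^ (-k)) * Jint k
            + ENNReal.ofReal (4^k*lam*(1+lam*|a-w|) ^ (-k)) * (ENNReal.ofReal lam⁻¹ * Jint k) := by
          rw [J_scale k lam w hlam, J_translate]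
      _ = ENNReal.ofReal ((2^k+4^k) * (1+lam*|a-w|) ^ (-k)) * Jint k := by
          rw [← mul_assoc, ← add_mul]
          congr 1
          rw [← ENNReal.ofReal_mul hB, ← ENNReal.ofReal_add hA (by positivity)]
          congr 1
          field_simp

/-- Pointwise three-to-two splitting. -/
lemma pt3 (k y x : ℝ) (hk : 1 < k) :
    (1+|x|) ^ (-k) * (1+|x-y|) ^ (-k) ≤
      (2^k*(1+|y|) ^ (-k)) * (1+|x-y|) ^ (-k) + (2^k*(1+|y|) ^ (-k)) * (1+|x|) ^ (-k) := by
  have hk0 : (0:ℝ) < k := by linarith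
  have hyb : (0:ℝ) < 1+|y| := by positivity
  have hxb : (0:ℝ) < 1+|x| := by positivity
  have hxyb : (0:ℝ) < 1+|x-y| := by positivity
  have tri : |y| ≤ |x| + |x-y| := by
    have h := abs_add_le x (y-x)
    rw [show x + (y-x) = y by ring, abs_sub_comm y x] at h
    exact h
  have hxnn : (0:ℝ) ≤ (1+|x|) ^ (-k) := Real.rpow_nonneg hxb.le _
  have hxynn : (0:ℝ) ≤ (1+|x-y|) ^ (-k) := Real.rpow_nonneg hxyb.le _
  by_cases hcase : 1+|y| ≤ 2*(1+|x|)
  · have h1 : (1+|x|) ^ (-k) ≤ 2^k * (1+|y|) ^ (-k) := key_rpow hk0 hyb two_pos hcase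
    have h2 := mul_le_mul_of_nonneg_right h1 hxynn
    have h3 : 0 ≤ (2^k*(1+|y|) ^ (-k)) * (1+|x|) ^ (-k) := by
      have : (0:ℝ) ≤ (2:ℝ)^k := Real.rpow_nonneg (by norm_num) _
      have h5 : (0:ℝ) ≤ (1+|y|) ^ (-k) := Real.rpow_nonneg hyb.le _
      positivity
    nlinarith [h2, h3]
  · push_neg at hcase
    have h1 : (1+|x-y|) ^ (-k) ≤ 2^k * (1+|y|) ^ (-k) :=
      key_rpow hk0 hyb two_pos (by linarith)
    have h2 := mul_le_mul_of_nonneg_left h1 hxnn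
    have h3 : 0 ≤ (2^k*(1+|y|) ^ (-k)) * (1+|x-y|) ^ (-k) := by
      have : (0:ℝ) ≤ (2:ℝ)^k := Real.rpow_nonneg (by norm_num) _
      have h5 : (0:ℝ) ≤ (1+|y|) ^ (-k) := Real.rpow_nonneg hyb.le _
      positivity
    nlinarith [h2, h3]

/-- **Three-factor convolution estimate.** For every `k > 1` there is a constant
`C > 0` depending only on `k` such that for all `y, z ∈ ℝ` and `λ ≠ 0`:
`∫ (1+|x|)^{-k}(1+|x-y|)^{-k}(1+|λx-z|)^{-k} dx
  ≤ C (1+|y|)^{-k} max{1,|λ|}⁻¹ [(1+min{1,|λ|}|y-z/λ|)^{-k} + (1+min{1,|λ|}|z/λ|)^{-k}]`. -/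
theorem three_factor_decay_estimate (k : ℝ) (hk : 1 < k) :
    ∃ C : ℝ, 0 < C ∧ ∀ (y z l : ℝ), l ≠ 0 →
      ∫⁻ x : ℝ, ENNReal.ofReal
          ((1 + |x|) ^ (-k) * (1 + |x - y|) ^ (-k) * (1 + |l * x - z|) ^ (-k)) ≤
        ENNReal.ofReal (C * (1 + |y|) ^ (-k) * (max 1 |l|)⁻¹ *
          ((1 + min 1 |l| * |y - z / l|) ^ (-k) +
           (1 + min 1 |l| * |z / l|) ^ (-k))) := by
  have hJ := J_lt_top k hk
  have hJt : (0:ℝ) ≤ (Jint k).toReal := ENNReal.toReal_nonneg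
  have h2k : (0:ℝ) < (2:ℝ)^k := Real.rpow_pos_of_pos (by norm_num) _
  have h4k : (0:ℝ) < (4:ℝ)^k := Real.rpow_pos_of_pos (by norm_num) _
  refine ⟨2^k * ((2^k + 4^k) * ((Jint k).toReal + 1)), by positivity, ?_⟩
  intro y z l hl
  have hlam : (0:ℝ) < |l| := abs_pos.2 hl
  set lam : ℝ := |l| with hlamdef
  set w : ℝ := z / l with hwdef
  have hrw : ∀ x : ℝ, |l * x - z| = lam * |x - w| := by
    intro x
    rw [show l*x - z = l*(x - z/l) by field_simp, abs_mul]
  have hyb : (0:ℝ) < 1+|y| := by positivity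
  have hfb : ∀ c x : ℝ, (0:ℝ) < 1+|x-c| := fun c x => by positivity
  have hgb : ∀ x : ℝ, (0:ℝ) < 1+lam*|x-w| := fun x => by
    nlinarith [abs_nonneg (x-w)]
  have hA : (0:ℝ) ≤ 2^k*(1+|y|) ^ (-k) := mul_nonneg h2k.le (Real.rpow_nonneg hyb.le _)
  -- decay factors
  have hM : (0:ℝ) < max 1 lam := lt_max_of_lt_left one_pos
  have hmu : (0:ℝ) ≤ min 1 lam := le_min zero_le_one hlam.le
  have hPy : (0:ℝ) ≤ (1 + min 1 lam * |y - w|) ^ (-k) :=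
    Real.rpow_nonneg (by positivity) _
  have hP0 : (0:ℝ) ≤ (1 + min 1 lam * |w|) ^ (-k) :=
    Real.rpow_nonneg (by positivity) _
  calc ∫⁻ x : ℝ, ENNReal.ofReal
          ((1 + |x|) ^ (-k) * (1 + |x - y|) ^ (-k) * (1 + |l * x - z|) ^ (-k))
      = ∫⁻ x : ℝ, ENNReal.ofReal ((1+|x|) ^ (-k)) * ENNReal.ofReal ((1+|x-y|) ^ (-k))
          * ENNReal.ofReal ((1+lam*|x-w|) ^ (-k)) := by
        apply lintegral_congr; intro x
        rw [hrw x, ENNReal.ofReal_mul (by positivity), ENNReal.ofReal_mul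
          (Real.rpow_nonneg (by positivity : (0:ℝ) ≤ 1+|x|) _)]
    _ ≤ ∫⁻ x : ℝ, (ENNReal.ofReal (2^k*(1+|y|) ^ (-k)) *
            (ENNReal.ofReal ((1+|x-y|) ^ (-k)) * ENNReal.ofReal ((1+lam*|x-w|) ^ (-k)))
          + ENNReal.ofReal (2^k*(1+|y|) ^ (-k)) *
            (ENNReal.ofReal ((1+|x|) ^ (-k)) * ENNReal.ofReal ((1+lam*|x-w|) ^ (-k)))) := by
        apply lintegral_mono; intro x
        dsimp only
        have hx : (0:ℝ) ≤ (1+|x|) ^ (-k) := Real.rpow_nonneg (by positivity) _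
        have hxy : (0:ℝ) ≤ (1+|x-y|) ^ (-k) := Real.rpow_nonneg (by positivity) _
        have key := pt3 k y x hk
        calc ENNReal.ofReal ((1+|x|) ^ (-k)) * ENNReal.ofReal ((1+|x-y|) ^ (-k))
              * ENNReal.ofReal ((1+lam*|x-w|) ^ (-k))
            ≤ ENNReal.ofReal ((2^k*(1+|y|) ^ (-k)) * (1+|x-y|) ^ (-k)
                + (2^k*(1+|y|) ^ (-k)) * (1+|x|) ^ (-k))
                * ENNReal.ofReal ((1+lam*|x-w|) ^ (-k)) := by
              rw [← ENNReal.ofReal_mul hx]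
              exact mul_le_mul_left (ENNReal.ofReal_le_ofReal key) _
          _ = _ := by
              rw [ENNReal.ofReal_add (mul_nonneg hA hxy) (mul_nonneg hA hx),
                ENNReal.ofReal_mul hA, ENNReal.ofReal_mul hA]
              ring
    _ = ENNReal.ofReal (2^k*(1+|y|) ^ (-k)) *
          (∫⁻ x : ℝ, ENNReal.ofReal ((1+|x-y|) ^ (-k)) * ENNReal.ofReal ((1+lam*|x-w|) ^ (-k)))
        + ENNReal.ofReal (2^k*(1+|y|) ^ (-k)) *
          (∫⁻ x : ℝ, ENNReal.ofReal ((1+|x|) ^ (-k)) * ENNReal.ofReal ((1+lam*|x-w|) ^ (-k))) := by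
        rw [lintegral_add_left (f := fun x : ℝ => ENNReal.ofReal (2^k*(1+|y|) ^ (-k)) * (ENNReal.ofReal ((1+|x-y|) ^ (-k)) * ENNReal.ofReal ((1+lam*|x-w|) ^ (-k)))) (((meas_base k y).mul (meas_scaled k lam w hlam.le)).const_mul _),
          lintegral_const_mul' _ _ ENNReal.ofReal_ne_top,
          lintegral_const_mul' _ _ ENNReal.ofReal_ne_top]
    _ ≤ ENNReal.ofReal (2^k*(1+|y|) ^ (-k)) *
          (ENNReal.ofReal ((2^k+4^k) * (max 1 lam)⁻¹ * (1 + min 1 lam * |y-w|) ^ (-k)) * Jint k)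
        + ENNReal.ofReal (2^k*(1+|y|) ^ (-k)) *
          (ENNReal.ofReal ((2^k+4^k) * (max 1 lam)⁻¹ * (1 + min 1 lam * |w|) ^ (-k)) * Jint k) := by
        gcongr
        · exact twoFactor k hk y w lam hlam
        · have h := twoFactor k hk 0 w lam hlam
          simpa [sub_zero, zero_sub, abs_neg] using h
    _ = ENNReal.ofReal ((2^k*(1+|y|) ^ (-k) * ((2^k+4^k) * (max 1 lam)⁻¹ * (1 + min 1 lam * |y-w|) ^ (-k))
          + 2^k*(1+|y|) ^ (-k) * ((2^k+4^k) * (max 1 lam)⁻¹ * (1 + min 1 lam * |w|) ^ (-k)))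
          * (Jint k).toReal) := by
        have hBy : (0:ℝ) ≤ (2^k+4^k) * (max 1 lam)⁻¹ * (1 + min 1 lam * |y-w|) ^ (-k) :=
          mul_nonneg (mul_nonneg (by positivity) (inv_nonneg.2 hM.le)) hPy
        have hB0 : (0:ℝ) ≤ (2^k+4^k) * (max 1 lam)⁻¹ * (1 + min 1 lam * |w|) ^ (-k) :=
          mul_nonneg (mul_nonneg (by positivity) (inv_nonneg.2 hM.le)) hP0
        calc ENNReal.ofReal (2^k*(1+|y|) ^ (-k)) *
              (ENNReal.ofReal ((2^k+4^k) * (max 1 lam)⁻¹ * (1 + min 1 lam * |y-w|) ^ (-k)) * Jint k)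
            + ENNReal.ofReal (2^k*(1+|y|) ^ (-k)) *
              (ENNReal.ofReal ((2^k+4^k) * (max 1 lam)⁻¹ * (1 + min 1 lam * |w|) ^ (-k)) * Jint k)
            = (ENNReal.ofReal (2^k*(1+|y|) ^ (-k)) *
                ENNReal.ofReal ((2^k+4^k) * (max 1 lam)⁻¹ * (1 + min 1 lam * |y-w|) ^ (-k))
              + ENNReal.ofReal (2^k*(1+|y|) ^ (-k)) *
                ENNReal.ofReal ((2^k+4^k) * (max 1 lam)⁻¹ * (1 + min 1 lam * |w|) ^ (-k))) * Jint k := by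
              ring
          _ = ENNReal.ofReal (2^k*(1+|y|) ^ (-k) * ((2^k+4^k) * (max 1 lam)⁻¹ * (1 + min 1 lam * |y-w|) ^ (-k))
              + 2^k*(1+|y|) ^ (-k) * ((2^k+4^k) * (max 1 lam)⁻¹ * (1 + min 1 lam * |w|) ^ (-k))) * Jint k := by
              rw [← ENNReal.ofReal_mul hA, ← ENNReal.ofReal_mul hA,
                ← ENNReal.ofReal_add (mul_nonneg hA hBy) (mul_nonneg hA hB0)]
          _ = _ := by
              conv_lhs => rw [← ENNReal.ofReal_toReal hJ.ne]
              rw [← ENNReal.ofReal_mul (by positivity)]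
    _ ≤ ENNReal.ofReal (2^k * ((2^k + 4^k) * ((Jint k).toReal + 1)) * (1 + |y|) ^ (-k) * (max 1 lam)⁻¹ *
          ((1 + min 1 lam * |y - w|) ^ (-k) + (1 + min 1 lam * |w|) ^ (-k))) := by
        apply ENNReal.ofReal_le_ofReal
        have hE : (0:ℝ) ≤ 2^k*(2^k+4^k)*(1+|y|) ^ (-k)*(max 1 lam)⁻¹*
            ((1 + min 1 lam * |y - w|) ^ (-k) + (1 + min 1 lam * |w|) ^ (-k)) :=
          mul_nonneg (mul_nonneg (mul_nonneg (mul_nonneg (by positivity) (by positivity))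
            (Real.rpow_nonneg hyb.le _)) (inv_nonneg.2 hM.le)) (by linarith)
        calc (2^k*(1+|y|) ^ (-k) * ((2^k+4^k) * (max 1 lam)⁻¹ * (1 + min 1 lam * |y-w|) ^ (-k))
              + 2^k*(1+|y|) ^ (-k) * ((2^k+4^k) * (max 1 lam)⁻¹ * (1 + min 1 lam * |w|) ^ (-k)))
              * (Jint k).toReal
            = (2^k*(2^k+4^k)*(1+|y|) ^ (-k)*(max 1 lam)⁻¹*
                ((1 + min 1 lam * |y - w|) ^ (-k) + (1 + min 1 lam * |w|) ^ (-k))) * (Jint k).toReal := by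
              ring
          _ ≤ (2^k*(2^k+4^k)*(1+|y|) ^ (-k)*(max 1 lam)⁻¹*
                ((1 + min 1 lam * |y - w|) ^ (-k) + (1 + min 1 lam * |w|) ^ (-k))) * ((Jint k).toReal + 1) :=
              mul_le_mul_of_nonneg_left (by linarith) hE
          _ = _ := by ring
end
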